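/- arXiv:2412.04561 — 4 statements merged into one kernel-verified Lean document; each statement's English description precedes it below -/
import Mathlib

section
/- Over a field of characteristic 3 with variables a₁₁, a₁₂, a₂₁, a₂₂, applying the differential operator (∂/∂a₁₁)² (∂/∂a₂₂)² to the rational function 1/(a₁₁a₂₂ − a₂₁a₁₂) yields 1/(a₁₁a₂₂ − a₂₁a₁₂)³. -/
/-!
In characteristic `p` every `p`-th power is a constant for every derivation. Writing
`u⁻¹ = u⁻³ · u²` with `u = a₁₁a₂₂ − a₂₁a₁₂`, the factor `u⁻³` therefore passes through all
four derivatives, and what is left is the polynomial computation `∂₁₁²∂₂₂²(u²) = 4 = 1`.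
-/

open MvPolynomial

namespace Derivation

variable {R A M : Type*} [CommSemiring R] [CommSemiring A] [Algebra R A]
  [AddCommMonoid M] [Module A M] [Module R M]

theorem map_pow_char_eq_zero (p : ℕ) [CharP A p] (D : Derivation R A M) (a : A) :
    D (a ^ p) = 0 := by
  rw [leibniz_pow, ← Nat.cast_smul_eq_nsmul A, CharP.cast_eq_zero, zero_smul]

theorem map_pow_char_mul (p : ℕ) [CharP A p] (D : Derivation R A M) (a b : A) :
    D (b ^ p * a) = b ^ p • D a := by
  rw [leibniz, map_pow_char_eq_zero, smul_zero, add_zero]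

end Derivation

theorem inv_eq_inv_pow_succ_mul_pow {K : Type*} [DivisionRing K] (a : K) (n : ℕ) :
    a⁻¹ = a⁻¹ ^ (n + 1) * a ^ n := by
  rcases eq_or_ne a 0 with rfl | ha
  · simp
  · rw [pow_succ', mul_assoc, inv_pow, inv_mul_cancel₀ (pow_ne_zero n ha), mul_one]

theorem pderiv_sq_pderiv_sq_det_sq {R : Type*} [CommRing R] :
    pderiv (0, 0) (pderiv (0, 0) (pderiv (1, 1) (pderiv (1, 1)
      ((X (0, 0) * X (1, 1) - X (1, 0) * X (0, 1)) ^ 2 : MvPolynomial (Fin 2 × Fin 2) R)))) =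
      4 := by
  simp [sq, pderiv_X]
  ring

theorem stmt_2_general
    (D₁ D₂ : Derivation ℤ (FractionRing (MvPolynomial (Fin 2 × Fin 2) (ZMod 3)))
      (FractionRing (MvPolynomial (Fin 2 × Fin 2) (ZMod 3))))
    (hD₁ : ∀ f : MvPolynomial (Fin 2 × Fin 2) (ZMod 3),
      D₁ (algebraMap _ _ f) = algebraMap _ _ (pderiv ((0 : Fin 2), (0 : Fin 2)) f))
    (hD₂ : ∀ f : MvPolynomial (Fin 2 × Fin 2) (ZMod 3),
      D₂ (algebraMap _ _ f) = algebraMap _ _ (pderiv ((1 : Fin 2), (1 : Fin 2)) f)) :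
    D₁ (D₁ (D₂ (D₂ ((algebraMap (MvPolynomial (Fin 2 × Fin 2) (ZMod 3))
        (FractionRing (MvPolynomial (Fin 2 × Fin 2) (ZMod 3)))
        (X (0, 0) * X (1, 1) - X (1, 0) * X (0, 1)))⁻¹)))) =
      ((algebraMap (MvPolynomial (Fin 2 × Fin 2) (ZMod 3))
        (FractionRing (MvPolynomial (Fin 2 × Fin 2) (ZMod 3)))
        (X (0, 0) * X (1, 1) - X (1, 0) * X (0, 1)))⁻¹) ^ 3 := by
  set u := algebraMap (MvPolynomial (Fin 2 × Fin 2) (ZMod 3))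
    (FractionRing (MvPolynomial (Fin 2 × Fin 2) (ZMod 3)))
    (X (0, 0) * X (1, 1) - X (1, 0) * X (0, 1))
  conv_lhs => rw [inv_eq_inv_pow_succ_mul_pow u 2]
  simp only [Nat.reduceAdd, Derivation.map_pow_char_mul 3, smul_eq_mul]
  have h_four : (4 : MvPolynomial (Fin 2 × Fin 2) (ZMod 3)) = 1 := by
    linear_combination CharP.cast_eq_zero (MvPolynomial (Fin 2 × Fin 2) (ZMod 3)) 3
  rw [← map_pow, hD₂, hD₂, hD₁, hD₁, pderiv_sq_pderiv_sq_det_sq, h_four, map_one, mul_one]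

/-- In the field of rational functions `F₃(a₁₁, a₁₂, a₂₁, a₂₂)` (realized as the fraction
field of the polynomial ring, with variables indexed by `(i,j) : Fin 2 × Fin 2`), applying
`(∂/∂a₁₁)² (∂/∂a₂₂)²` to `1/(a₁₁a₂₂ − a₂₁a₁₂)` yields `1/(a₁₁a₂₂ − a₂₁a₁₂)³`.
The partial derivatives are formalized as derivations on the fraction field extending the
formal partial derivatives of polynomials. -/
theorem stmt_2 [Fact (Nat.Prime 3)]
    (D₁ D₂ : Derivation ℤ (FractionRing (MvPolynomial (Fin 2 × Fin 2) (ZMod 3)))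
      (FractionRing (MvPolynomial (Fin 2 × Fin 2) (ZMod 3))))
    (hD₁ : ∀ f : MvPolynomial (Fin 2 × Fin 2) (ZMod 3),
      D₁ (algebraMap _ _ f) = algebraMap _ _ (pderiv ((0 : Fin 2), (0 : Fin 2)) f))
    (hD₂ : ∀ f : MvPolynomial (Fin 2 × Fin 2) (ZMod 3),
      D₂ (algebraMap _ _ f) = algebraMap _ _ (pderiv ((1 : Fin 2), (1 : Fin 2)) f)) :
    D₁ (D₁ (D₂ (D₂ ((algebraMap (MvPolynomial (Fin 2 × Fin 2) (ZMod 3))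
        (FractionRing (MvPolynomial (Fin 2 × Fin 2) (ZMod 3)))
        (X (0, 0) * X (1, 1) - X (1, 0) * X (0, 1)))⁻¹)))) =
      ((algebraMap (MvPolynomial (Fin 2 × Fin 2) (ZMod 3))
        (FractionRing (MvPolynomial (Fin 2 × Fin 2) (ZMod 3)))
        (X (0, 0) * X (1, 1) - X (1, 0) * X (0, 1)))⁻¹) ^ 3 :=
  stmt_2_general D₁ D₂ hD₁ hD₂
end

section
/- Let A be a d × (d+2) matrix over a field k, and for 0 ≤ j < m ≤ d+1 let Y_{jm} be the determinant of A with columns j and m removed. Then for any 0 ≤ j₁ < j₂ < j₃ < j₄ ≤ d+1, the Plücker relation Y_{j₁j₂}Y_{j₃j₄} − Y_{j₁j₃}Y_{j₂j₄} + Y_{j₁j₄}Y_{j₂j₃} = 0 holds. -/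
set_option maxHeartbeats 1600000

lemma succAbove_val' {n : ℕ} (p : Fin (n+1)) (i : Fin n) :
    ((p.succAbove i : Fin (n+1)) : ℕ) = if (i:ℕ) < (p:ℕ) then (i:ℕ) else (i:ℕ)+1 := by
  rcases lt_or_ge ((i:ℕ)) ((p:ℕ)) with h | h
  · rw [Fin.succAbove_of_castSucc_lt _ _ (by simpa [Fin.lt_def] using h), if_pos h,
      Fin.coe_castSucc]
  · rw [Fin.succAbove_of_le_castSucc _ _ (by simpa [Fin.le_def] using h),
      if_neg (not_lt.2 h), Fin.val_succ]

lemma cycleRange_val' {n : ℕ} (p q : Fin (n+1)) :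
    ((Fin.cycleRange p q : Fin (n+1)) : ℕ) =
      if (q:ℕ) < (p:ℕ) then (q:ℕ)+1 else if (q:ℕ) = (p:ℕ) then 0 else (q:ℕ) := by
  rcases lt_trichotomy ((q:ℕ)) ((p:ℕ)) with h | h | h
  · rw [Fin.coe_cycleRange_of_lt h, if_pos h]
  · have : q = p := Fin.ext h
    rw [this, Fin.cycleRange_self]
    simp [h]
  · rw [Fin.cycleRange_of_gt h]
    rw [if_neg (by omega), if_neg (by omega)]

lemma cycleRange_symm_val' {n : ℕ} (p q : Fin (n+1)) :
    (((Fin.cycleRange p).symm q : Fin (n+1)) : ℕ) =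
      if (q:ℕ) = 0 then (p:ℕ) else if (q:ℕ) ≤ (p:ℕ) then (q:ℕ) - 1 else (q:ℕ) := by
  have hq : ((Fin.cycleRange p ((Fin.cycleRange p).symm q) : Fin (n+1)) : ℕ) = (q:ℕ) := by
    rw [Equiv.apply_symm_apply]
  rw [cycleRange_val'] at hq
  split_ifs at hq <;> split_ifs <;> omega

lemma neg_one_pow_congr' {k : Type*} [CommRing k] {a b : ℕ} (h : a % 2 = b % 2) :
    (-1:k)^a = (-1:k)^b := by
  conv_lhs => rw [← Nat.div_add_mod a 2]
  conv_rhs => rw [← Nat.div_add_mod b 2]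
  rw [pow_add, pow_add, pow_mul, pow_mul]
  simp [h, neg_one_sq]

lemma kernel_row {k : Type*} [CommRing k] {d : ℕ} (M : Matrix (Fin d) (Fin (d+1)) k) (r : Fin d) :
    ∑ i : Fin (d+1), (-1:k)^(i:ℕ) * M r i * (M.submatrix id i.succAbove).det = 0 := by
  have h0 : (Matrix.of (Fin.cons (M r) M) : Matrix (Fin (d+1)) (Fin (d+1)) k).det = 0 :=
    Matrix.det_zero_of_row_eq (Fin.succ_ne_zero r).symm
      (by funext j; simp [Matrix.of_apply, Fin.cons_zero, Fin.cons_succ]; rfl)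
  rw [Matrix.det_succ_row_zero] at h0
  rw [← h0]
  refine Finset.sum_congr rfl fun i _ => ?_
  have h1 : (Matrix.of (Fin.cons (M r) M) : Matrix (Fin (d+1)) (Fin (d+1)) k) 0 i = M r i := by
    simp; rfl
  have h2 : (Matrix.of (Fin.cons (M r) M) : Matrix (Fin (d+1)) (Fin (d+1)) k).submatrix
      Fin.succ i.succAbove = M.submatrix id i.succAbove := by
    ext a b; simp; rfl
  rw [h1, h2]

lemma det_perm_cycle {k : Type*} [CommRing k] {m : ℕ} (N T : Matrix (Fin (m+1)) (Fin (m+1)) k)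
    (p p' : Fin (m+1))
    (hT : ∀ i q, T i q = N i ((Fin.cycleRange p').symm (Fin.cycleRange p q))) :
    T.det = (-1:k)^((p:ℕ)+(p':ℕ)) * N.det := by
  have hTe : T = N.submatrix id ((Fin.cycleRange p')⁻¹ * Fin.cycleRange p) := by
    ext i q; simpa using hT i q
  rw [hTe, Matrix.det_permute']
  congr 1
  have : Equiv.Perm.sign ((Fin.cycleRange p')⁻¹ * Fin.cycleRange p)
      = (-1 : ℤˣ)^((p:ℕ)+(p':ℕ)) := by
    rw [map_mul, map_inv, Fin.sign_cycleRange, Fin.sign_cycleRange, Int.units_inv_eq_self,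
      pow_add, mul_comm]
  rw [this]
  push_cast
  ring

lemma succAbove_comp' {n : ℕ} (j m : Fin (n+2)) (hjm : (j:ℕ) < (m:ℕ)) (i : Fin (n+1))
    (hi : (i:ℕ) = (m:ℕ) - 1) (hj : (j:ℕ) < n+1) (q : Fin n) :
    j.succAbove (i.succAbove q) = m.succAbove ((⟨(j:ℕ), hj⟩ : Fin (n+1)).succAbove q) := by
  apply Fin.ext
  rw [succAbove_val', succAbove_val', succAbove_val', succAbove_val']
  have hq := q.isLt
  have hm := m.isLt
  have e1 : ((⟨(j:ℕ), hj⟩ : Fin (n+1)):ℕ) = (j:ℕ) := rfl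
  split_ifs <;> omega


/-- `Ydel A j m h` is the determinant of the `d × (d+2)` matrix `A` with columns `j` and `m`
removed (here `j < m`). -/
noncomputable def Ydel {k : Type*} [CommRing k] {d : ℕ}
    (A : Matrix (Fin d) (Fin (d + 2)) k) (j m : Fin (d + 2)) (h : (j : ℕ) < (m : ℕ)) : k :=
  (A.submatrix id fun i : Fin d =>
    m.succAbove
      ((⟨(j : ℕ), lt_of_lt_of_le h (Nat.lt_succ_iff.mp m.isLt)⟩ : Fin (d + 1)).succAbove i)).det

/-- The Plücker relation for the maximal minors of a `d × (d+2)` matrix: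
`Y_{j₁j₂}Y_{j₃j₄} − Y_{j₁j₃}Y_{j₂j₄} + Y_{j₁j₄}Y_{j₂j₃} = 0`. -/
theorem stmt_7 {k : Type*} [CommRing k] {d : ℕ} (A : Matrix (Fin d) (Fin (d + 2)) k)
    (j₁ j₂ j₃ j₄ : Fin (d + 2)) (h12 : (j₁ : ℕ) < j₂) (h23 : (j₂ : ℕ) < j₃)
    (h34 : (j₃ : ℕ) < j₄) :
    Ydel A j₁ j₂ h12 * Ydel A j₃ j₄ h34
      - Ydel A j₁ j₃ (h12.trans h23) * Ydel A j₂ j₄ (h23.trans h34)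
      + Ydel A j₁ j₄ ((h12.trans h23).trans h34) * Ydel A j₂ j₃ h23 = 0 := by
  have hlt4 : (j₄:ℕ) < d + 2 := j₄.isLt
  obtain ⟨n, rfl⟩ : ∃ n, d = n + 2 := ⟨d - 2, by omega⟩
  have hj3 : (j₃:ℕ) < n+3 := by omega
  have hj2 : (j₂:ℕ) < n+3 := by omega
  have hj1 : (j₁:ℕ) < n+3 := by omega
  obtain ⟨p₂, ep2⟩ : ∃ p : Fin (n+2), (p:ℕ) = (j₂:ℕ) := ⟨⟨(j₂:ℕ), by omega⟩, rfl⟩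
  obtain ⟨p₃, ep3⟩ : ∃ p : Fin (n+2), (p:ℕ) = (j₃:ℕ)-1 := ⟨⟨(j₃:ℕ)-1, by omega⟩, rfl⟩
  obtain ⟨p₄, ep4⟩ : ∃ p : Fin (n+2), (p:ℕ) = (j₄:ℕ)-2 := ⟨⟨(j₄:ℕ)-2, by omega⟩, rfl⟩
  obtain ⟨i₂, ei2⟩ : ∃ p : Fin (n+3), (p:ℕ) = (j₂:ℕ)-1 := ⟨⟨(j₂:ℕ)-1, by omega⟩, rfl⟩
  obtain ⟨i₃, ei3⟩ : ∃ p : Fin (n+3), (p:ℕ) = (j₃:ℕ)-1 := ⟨⟨(j₃:ℕ)-1, by omega⟩, rfl⟩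
  obtain ⟨i₄, ei4⟩ : ∃ p : Fin (n+3), (p:ℕ) = (j₄:ℕ)-1 := ⟨⟨(j₄:ℕ)-1, by omega⟩, rfl⟩
  obtain ⟨B, hBdef⟩ : ∃ B : Matrix (Fin (n+2)) (Fin (n+2)) k,
      B = A.submatrix id (fun q => j₄.succAbove ((⟨(j₃:ℕ), hj3⟩ : Fin (n+3)).succAbove q)) :=
    ⟨_, rfl⟩
  obtain ⟨M, hMdef⟩ : ∃ M : Matrix (Fin (n+2)) (Fin (n+3)) k,
      M = A.submatrix id j₁.succAbove := ⟨_, rfl⟩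
  obtain ⟨N24, hN24def⟩ : ∃ N : Matrix (Fin (n+2)) (Fin (n+2)) k,
      N = A.submatrix id (fun q => j₄.succAbove ((⟨(j₂:ℕ), hj2⟩ : Fin (n+3)).succAbove q)) :=
    ⟨_, rfl⟩
  obtain ⟨N23, hN23def⟩ : ∃ N : Matrix (Fin (n+2)) (Fin (n+2)) k,
      N = A.submatrix id (fun q => j₃.succAbove ((⟨(j₂:ℕ), hj2⟩ : Fin (n+3)).succAbove q)) :=
    ⟨_, rfl⟩
  have e3' : ((⟨(j₃:ℕ), hj3⟩ : Fin (n+3)):ℕ) = (j₃:ℕ) := rfl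
  have e2' : ((⟨(j₂:ℕ), hj2⟩ : Fin (n+3)):ℕ) = (j₂:ℕ) := rfl
  -- σ₃₄ p₂ = j₂
  have hσp2 : j₄.succAbove ((⟨(j₃:ℕ), hj3⟩ : Fin (n+3)).succAbove p₂) = j₂ := by
    apply Fin.ext
    rw [succAbove_val', succAbove_val']
    split_ifs <;> omega
  have hsA2 : j₁.succAbove i₂ = j₂ := by
    apply Fin.ext; rw [succAbove_val']; split_ifs <;> omega
  have hsA3 : j₁.succAbove i₃ = j₃ := by
    apply Fin.ext; rw [succAbove_val']; split_ifs <;> omega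
  have hsA4 : j₁.succAbove i₄ = j₄ := by
    apply Fin.ext; rw [succAbove_val']; split_ifs <;> omega
  -- Laplace expansion of updateCol determinants
  have hG : ∀ w : Fin (n+2) → k, (B.updateCol p₂ w).det
      = ∑ r : Fin (n+2), ((-1:k)^((r:ℕ)+(p₂:ℕ)) * (B.submatrix r.succAbove p₂.succAbove).det)
        * w r := by
    intro w
    rw [Matrix.det_succ_column (B.updateCol p₂ w) p₂]
    refine Finset.sum_congr rfl fun r _ => ?_
    rw [Matrix.updateCol_self]
    have h2 : (B.updateCol p₂ w).submatrix r.succAbove p₂.succAbove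
        = B.submatrix r.succAbove p₂.succAbove := by
      ext a b
      simp [Matrix.updateCol_apply, Fin.succAbove_ne p₂ b]
    rw [h2]; ring
  -- the key vanishing sum
  have key : ∑ i : Fin (n+3), (-1:k)^(i:ℕ) * (M.submatrix id i.succAbove).det
      * (B.updateCol p₂ fun r => M r i).det = 0 := by
    have step : ∀ i : Fin (n+3), (-1:k)^(i:ℕ) * (M.submatrix id i.succAbove).det
        * (B.updateCol p₂ fun r => M r i).det
        = ∑ r : Fin (n+2), ((-1:k)^((r:ℕ)+(p₂:ℕ)) * (B.submatrix r.succAbove p₂.succAbove).det)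
          * ((-1:k)^(i:ℕ) * M r i * (M.submatrix id i.succAbove).det) := by
      intro i
      rw [hG, Finset.mul_sum]
      exact Finset.sum_congr rfl fun r _ => by ring
    rw [Finset.sum_congr rfl fun i _ => step i, Finset.sum_comm]
    refine Finset.sum_eq_zero fun r _ => ?_
    rw [← Finset.mul_sum, kernel_row M r, mul_zero]

  -- vanishing of all other terms
  have hvan : ∀ i : Fin (n+3), i ≠ i₂ → i ≠ i₃ → i ≠ i₄ →
      (B.updateCol p₂ fun r => M r i).det = 0 := by
    intro i h2 h3 h4
    have hs := succAbove_val' j₁ i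
    have hne2 : j₁.succAbove i ≠ j₂ := by
      intro h; apply h2; apply Fin.ext
      have hv := congrArg Fin.val h
      rw [hs] at hv
      split_ifs at hv <;> omega
    have hne3 : j₁.succAbove i ≠ j₃ := by
      intro h; apply h3; apply Fin.ext
      have hv := congrArg Fin.val h
      rw [hs] at hv
      split_ifs at hv <;> omega
    have hne4 : j₁.succAbove i ≠ j₄ := by
      intro h; apply h4; apply Fin.ext
      have hv := congrArg Fin.val h
      rw [hs] at hv
      split_ifs at hv <;> omega
    obtain ⟨a, ha⟩ := Fin.exists_succAbove_eq hne4
    have ha' : a ≠ ⟨(j₃:ℕ), hj3⟩ := by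
      intro h
      apply hne3
      rw [h] at ha
      rw [← ha]
      apply Fin.ext
      rw [succAbove_val']
      split_ifs <;> omega
    obtain ⟨q, hq⟩ := Fin.exists_succAbove_eq ha'
    have hqcol : (fun r => M r i) = fun r => B r q := by
      funext r
      rw [hMdef, hBdef]
      simp only [Matrix.submatrix_apply, id_eq]
      rw [hq, ha]
    have hqne : q ≠ p₂ := by
      intro h
      apply hne2
      rw [← ha, ← hq, h]
      exact hσp2
    rw [hqcol]
    exact Matrix.det_updateCol_eq_zero hqne

  -- exchange identifications via cycle permutations
  have hidx3 : ∀ q : Fin (n+2),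
      j₄.succAbove ((⟨(j₂:ℕ), hj2⟩ : Fin (n+3)).succAbove
        ((Fin.cycleRange p₃).symm (Fin.cycleRange p₂ q)))
      = if q = p₂ then j₃ else j₄.succAbove ((⟨(j₃:ℕ), hj3⟩ : Fin (n+3)).succAbove q) := by
    intro q
    have c1 := cycleRange_val' p₂ q
    have c2 := cycleRange_symm_val' p₃ (Fin.cycleRange p₂ q)
    apply Fin.ext
    rw [apply_ite Fin.val]
    rw [succAbove_val', succAbove_val', succAbove_val', succAbove_val']
    have hq := q.isLt
    simp only [Fin.ext_iff]
    split_ifs at c1 <;> rw [c1] at c2 <;> split_ifs at c2 <;> split_ifs <;> first | exact False.elim (by assumption) | omega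
  have hidx4 : ∀ q : Fin (n+2),
      j₃.succAbove ((⟨(j₂:ℕ), hj2⟩ : Fin (n+3)).succAbove
        ((Fin.cycleRange p₄).symm (Fin.cycleRange p₂ q)))
      = if q = p₂ then j₄ else j₄.succAbove ((⟨(j₃:ℕ), hj3⟩ : Fin (n+3)).succAbove q) := by
    intro q
    have c1 := cycleRange_val' p₂ q
    have c2 := cycleRange_symm_val' p₄ (Fin.cycleRange p₂ q)
    apply Fin.ext
    rw [apply_ite Fin.val]
    rw [succAbove_val', succAbove_val', succAbove_val', succAbove_val']
    have hq := q.isLt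
    simp only [Fin.ext_iff]
    split_ifs at c1 <;> rw [c1] at c2 <;> split_ifs at c2 <;> split_ifs <;> first | exact False.elim (by assumption) | omega
  have hT3 : ∀ r q, (B.updateCol p₂ fun x => M x i₃) r q
      = N24 r ((Fin.cycleRange p₃).symm (Fin.cycleRange p₂ q)) := by
    intro r q
    have hcol : (fun x => M x i₃) = fun x => A x j₃ := by
      funext x; rw [hMdef]; simp only [Matrix.submatrix_apply, id_eq]; rw [hsA3]
    rw [hcol, Matrix.updateCol_apply, hN24def]
    simp only [Matrix.submatrix_apply, id_eq]
    rw [hidx3 q, apply_ite (A r), hBdef]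
    simp only [Matrix.submatrix_apply, id_eq]
  have hT4 : ∀ r q, (B.updateCol p₂ fun x => M x i₄) r q
      = N23 r ((Fin.cycleRange p₄).symm (Fin.cycleRange p₂ q)) := by
    intro r q
    have hcol : (fun x => M x i₄) = fun x => A x j₄ := by
      funext x; rw [hMdef]; simp only [Matrix.submatrix_apply, id_eq]; rw [hsA4]
    rw [hcol, Matrix.updateCol_apply, hN23def]
    simp only [Matrix.submatrix_apply, id_eq]
    rw [hidx4 q, apply_ite (A r), hBdef]
    simp only [Matrix.submatrix_apply, id_eq]
  have hdet3 : (B.updateCol p₂ fun x => M x i₃).det = (-1:k)^((p₂:ℕ)+(p₃:ℕ)) * N24.det :=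
    det_perm_cycle N24 _ p₂ p₃ hT3
  have hdet4 : (B.updateCol p₂ fun x => M x i₄).det = (-1:k)^((p₂:ℕ)+(p₄:ℕ)) * N23.det :=
    det_perm_cycle N23 _ p₂ p₄ hT4
  have hterm2 : (B.updateCol p₂ fun x => M x i₂).det = B.det := by
    have hcol : (fun x => M x i₂) = fun x => B x p₂ := by
      funext x; rw [hMdef, hBdef]; simp only [Matrix.submatrix_apply, id_eq]
      rw [hsA2, hσp2]
    rw [hcol, Matrix.updateCol_eq_self]
  -- identification of minors with Ydel
  have hmin : ∀ (mm : Fin (n+2+2)) (hmm : (j₁:ℕ) < (mm:ℕ)) (ii : Fin (n+3)),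
      (ii:ℕ) = (mm:ℕ)-1 → (M.submatrix id ii.succAbove).det = Ydel A j₁ mm hmm := by
    intro mm hmm ii hii
    have hsub : M.submatrix id ii.succAbove
        = A.submatrix id (fun q =>
            mm.succAbove ((⟨(j₁:ℕ), by omega⟩ : Fin (n+3)).succAbove q)) := by
      ext r q
      rw [hMdef]
      simp only [Matrix.submatrix_apply, id_eq]
      rw [succAbove_comp' j₁ mm hmm ii hii (by omega) q]
    rw [hsub]
    rfl
  have hY12 := hmin j₂ h12 i₂ ei2
  have hY13 := hmin j₃ (h12.trans h23) i₃ ei3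
  have hY14 := hmin j₄ ((h12.trans h23).trans h34) i₄ ei4
  have hY34 : B.det = Ydel A j₃ j₄ h34 := by rw [hBdef]; rfl
  have hY24 : N24.det = Ydel A j₂ j₄ (h23.trans h34) := by rw [hN24def]; rfl
  have hY23 : N23.det = Ydel A j₂ j₃ h23 := by rw [hN23def]; rfl
  -- restrict the sum to the three surviving terms
  have hd23 : i₂ ≠ i₃ := by intro h; have := congrArg Fin.val h; omega
  have hd24 : i₂ ≠ i₄ := by intro h; have := congrArg Fin.val h; omega
  have hd34 : i₃ ≠ i₄ := by intro h; have := congrArg Fin.val h; omega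
  have hsub0 : ∀ x : Fin (n+3), x ∈ Finset.univ →
      x ∉ ({i₂, i₃, i₄} : Finset (Fin (n+3))) →
      (-1:k)^(x:ℕ) * (M.submatrix id x.succAbove).det
        * (B.updateCol p₂ fun r => M r x).det = 0 := by
    intro x _ hx
    simp only [Finset.mem_insert, Finset.mem_singleton, not_or] at hx
    rw [hvan x hx.1 hx.2.1 hx.2.2, mul_zero]
  have key2 := (Finset.sum_subset
    (Finset.subset_univ ({i₂, i₃, i₄} : Finset (Fin (n+3)))) hsub0).trans key
  rw [Finset.sum_insert (by simp [hd23, hd24]), Finset.sum_insert (by simp [hd34]),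
    Finset.sum_singleton] at key2
  rw [hterm2, hdet3, hdet4, hY12, hY13, hY14, hY34, hY24, hY23, ei2, ei3, ei4,
    ep2, ep3, ep4] at key2
  -- final sign bookkeeping
  have hP : (-1:k)^((j₂:ℕ)-1) * (-1:k)^((j₂:ℕ)-1) = 1 := by
    rw [← pow_add]; exact Even.neg_one_pow ⟨(j₂:ℕ)-1, rfl⟩
  have hQ : (-1:k)^((j₃:ℕ)-1) * (-1:k)^((j₂:ℕ)+((j₃:ℕ)-1)) = -((-1:k)^((j₂:ℕ)-1)) := by
    rw [← pow_add,
      neg_one_pow_congr' (a := ((j₃:ℕ)-1)+((j₂:ℕ)+((j₃:ℕ)-1))) (b := ((j₂:ℕ)-1)+1) (by omega),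
      pow_succ]
    ring
  have hS : (-1:k)^((j₄:ℕ)-1) * (-1:k)^((j₂:ℕ)+((j₄:ℕ)-2)) = (-1:k)^((j₂:ℕ)-1) := by
    rw [← pow_add]; exact neg_one_pow_congr' (by omega)
  linear_combination ((-1:k)^((j₂:ℕ)-1)) * key2
    + (- (Ydel A j₁ j₂ h12 * Ydel A j₃ j₄ h34)
        + Ydel A j₁ j₃ (h12.trans h23) * Ydel A j₂ j₄ (h23.trans h34)
        - Ydel A j₁ j₄ ((h12.trans h23).trans h34) * Ydel A j₂ j₃ h23) * hP
    + (-((-1:k)^((j₂:ℕ)-1)) * (Ydel A j₁ j₃ (h12.trans h23)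
        * Ydel A j₂ j₄ (h23.trans h34))) * hQ
    + (-((-1:k)^((j₂:ℕ)-1)) * (Ydel A j₁ j₄ ((h12.trans h23).trans h34)
        * Ydel A j₂ j₃ h23)) * hS
end

section
/- Let k be a field of characteristic p and let X₀,...,X_d be the signed maximal minors of the generic d × (d+1) matrix over k. For any monomial X^J in the X_j whose total degree (row sum of J) is congruent to −1 mod p, and for any row index 1 ≤ r ≤ d and any column indices 0 ≤ j₁,...,j_p ≤ d, the p-fold derivative (∂/∂a_{r,j₁})···(∂/∂a_{r,j_p}) X^J = 0. -/
open MvPolynomial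

/-- `Xminor k d m` is the signed maximal minor `X_m = (−1)^m det(A omit column m)` of the
generic `d × (d+1)` matrix, an element of `k[a_{i,j} : 1 ≤ i ≤ d, 0 ≤ j ≤ d]`. -/
noncomputable def Xminor (k : Type*) [CommRing k] (d : ℕ) (m : Fin (d + 1)) :
    MvPolynomial (Fin d × Fin (d + 1)) k :=
  (-1 : MvPolynomial (Fin d × Fin (d + 1)) k) ^ (m : ℕ) *
    (Matrix.of fun a b : Fin d =>
      (X (a, m.succAbove b) : MvPolynomial (Fin d × Fin (d + 1)) k)).det

namespace Stmt15

variable {k : Type*} [Field k] {n : ℕ}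

/-- Polynomials not involving the variables of row `r`. -/
def RowFree (r : Fin (n + 1)) (q : MvPolynomial (Fin (n + 1) × Fin (n + 2)) k) : Prop :=
  ∀ v : Fin (n + 2), pderiv (r, v) q = 0

variable {r : Fin (n + 1)}

lemma RowFree.mul {q₁ q₂} (h₁ : RowFree (k := k) r q₁) (h₂ : RowFree r q₂) :
    RowFree r (q₁ * q₂) := fun v => by
  rw [pderiv_mul, h₁ v, h₂ v, zero_mul, mul_zero, add_zero]

lemma RowFree.one : RowFree (k := k) (n := n) r 1 := fun v => pderiv_one

lemma RowFree.pow {q} (h : RowFree (k := k) r q) (m : ℕ) : RowFree r (q ^ m) := by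
  induction m with
  | zero => exact RowFree.one
  | succ m ih => rw [pow_succ]; exact ih.mul h

lemma RowFree.sum {ι : Type*} (s : Finset ι) (f : ι → MvPolynomial (Fin (n + 1) × Fin (n + 2)) k)
    (h : ∀ i ∈ s, RowFree r (f i)) : RowFree r (∑ i ∈ s, f i) := fun v => by
  rw [map_sum, Finset.sum_eq_zero fun i hi => h i hi v]

lemma RowFree.prod {ι : Type*} (s : Finset ι) (f : ι → MvPolynomial (Fin (n + 1) × Fin (n + 2)) k)
    (h : ∀ i ∈ s, RowFree r (f i)) : RowFree r (∏ i ∈ s, f i) :=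
  Finset.prod_induction f (RowFree r) (fun _ _ => RowFree.mul) RowFree.one h

lemma RowFree.zsmul {q} (h : RowFree (k := k) r q) (z : ℤ) : RowFree r (z • q) := fun v => by
  rw [map_zsmul, h v, smul_zero]

lemma RowFree.X_ne {a : Fin (n + 1)} (ha : a ≠ r) (l : Fin (n + 2)) :
    RowFree (k := k) r (X (a, l)) := fun v =>
  pderiv_X_of_ne (by simp [Prod.ext_iff, ha])

lemma RowFree.det {M : Matrix (Fin n) (Fin n) (MvPolynomial (Fin (n + 1) × Fin (n + 2)) k)}
    (h : ∀ a b, RowFree r (M a b)) : RowFree r M.det := by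
  rw [Matrix.det_apply]
  exact RowFree.sum _ _ fun σ _ => by
    rw [Units.smul_def]
    exact (RowFree.prod _ _ fun i _ => h _ _).zsmul _

end Stmt15

namespace Stmt15

variable {k : Type*} [Field k] {n : ℕ}

lemma RowFree.neg {r : Fin (n + 1)} {q} (h : RowFree (k := k) r q) : RowFree r (-q) := fun v => by
  rw [map_neg, h v, neg_zero]

/-- The matrix whose determinant is (up to sign) `Xminor`. -/
noncomputable def Mmat (k : Type*) [Field k] (n : ℕ) (j : Fin (n + 2)) :
    Matrix (Fin (n + 1)) (Fin (n + 1)) (MvPolynomial (Fin (n + 1) × Fin (n + 2)) k) :=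
  Matrix.of fun a b => X (a, j.succAbove b)

/-- Minor obtained from `Mmat` by deleting row `r` and column `b`. -/
noncomputable def Dmm (k : Type*) [Field k] (n : ℕ) (r : Fin (n + 1)) (j : Fin (n + 2))
    (b : Fin (n + 1)) : MvPolynomial (Fin (n + 1) × Fin (n + 2)) k :=
  ((Mmat k n j).submatrix r.succAbove b.succAbove).det

variable {r : Fin (n + 1)}

lemma rowFree_Dmm (j : Fin (n + 2)) (b : Fin (n + 1)) : RowFree r (Dmm k n r j b) :=
  RowFree.det fun a c => RowFree.X_ne (Fin.succAbove_ne r a) _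

lemma rowFree_coeff (j : Fin (n + 2)) (b : Fin (n + 1)) (e : ℕ) :
    RowFree r ((-1 : MvPolynomial (Fin (n + 1) × Fin (n + 2)) k) ^ e * Dmm k n r j b) :=
  ((RowFree.one.neg).pow e).mul (rowFree_Dmm j b)

/-- Laplace expansion of `Xminor` along row `r`. -/
lemma laplace (r : Fin (n + 1)) (j : Fin (n + 2)) :
    Xminor k (n + 1) j = ∑ b : Fin (n + 1),
      ((-1 : MvPolynomial (Fin (n + 1) × Fin (n + 2)) k) ^ ((j : ℕ) + (r : ℕ) + (b : ℕ)) *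
        Dmm k n r j b) * X (r, j.succAbove b) := by
  rw [Xminor,
    show (Matrix.of fun a b : Fin (n + 1) =>
        (X (a, j.succAbove b) : MvPolynomial (Fin (n + 1) × Fin (n + 2)) k)) = Mmat k n j from rfl,
    Matrix.det_succ_row _ r, Finset.mul_sum]
  refine Finset.sum_congr rfl fun b _ => ?_
  rw [Dmm]
  have : Mmat k n j r b = X (r, j.succAbove b) := rfl
  rw [this]
  ring

/-- `Ec r i j = ∂_{(r,i)} X_j`, the "constant" coefficients. -/
noncomputable def Ec (k : Type*) [Field k] (n : ℕ) (r : Fin (n + 1)) (i j : Fin (n + 2)) :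
    MvPolynomial (Fin (n + 1) × Fin (n + 2)) k :=
  pderiv (r, i) (Xminor k (n + 1) j)

lemma Ec_eq (i j : Fin (n + 2)) :
    Ec k n r i j = ∑ b : Fin (n + 1), if j.succAbove b = i then
      ((-1 : MvPolynomial (Fin (n + 1) × Fin (n + 2)) k) ^ ((j : ℕ) + (r : ℕ) + (b : ℕ)) *
        Dmm k n r j b) else 0 := by
  rw [Ec, laplace r j, map_sum]
  refine Finset.sum_congr rfl fun b _ => ?_
  rw [pderiv_mul, rowFree_coeff j b _ i, zero_mul, zero_add, pderiv_X, Pi.single_apply]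
  have h : ((r, j.succAbove b) = ((r, i) : Fin (n + 1) × Fin (n + 2))) ↔ j.succAbove b = i := by
    simp [Prod.ext_iff]
  rw [if_congr h rfl rfl, mul_ite, mul_one, mul_zero]

lemma rowFree_Ec (i j : Fin (n + 2)) : RowFree r (Ec k n r i j) := by
  rw [Ec_eq]
  exact RowFree.sum _ _ fun b _ => by
    split
    · exact rowFree_coeff j b _
    · exact fun v => map_zero _

end Stmt15

namespace Stmt15

variable {k : Type*} [Field k] {n : ℕ} {r : Fin (n + 1)}

lemma collapse (s : Fin (n + 1)) (j : Fin (n + 2)) :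
    ∑ i : Fin (n + 2), X (s, i) * Ec k n r i j
      = ∑ b : Fin (n + 1),
        ((-1 : MvPolynomial (Fin (n + 1) × Fin (n + 2)) k) ^ ((j : ℕ) + (r : ℕ) + (b : ℕ)) *
          Dmm k n r j b) * X (s, j.succAbove b) := by
  simp only [Ec_eq, Finset.mul_sum, mul_ite, mul_zero]
  rw [Finset.sum_comm]
  refine Finset.sum_congr rfl fun b _ => ?_
  rw [Finset.sum_ite_eq, if_pos (Finset.mem_univ _)]
  ring

lemma euler (j : Fin (n + 2)) :
    ∑ i : Fin (n + 2), X (r, i) * Ec k n r i j = Xminor k (n + 1) j := by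
  rw [collapse, ← laplace r j]

lemma row_ortho {s : Fin (n + 1)} (hs : s ≠ r) (j : Fin (n + 2)) :
    ∑ i : Fin (n + 2), X (s, i) * Ec k n r i j = 0 := by
  rw [collapse]
  have hdet0 : ((Mmat k n j).updateRow r fun b => X (s, j.succAbove b)).det = 0 := by
    refine Matrix.det_zero_of_row_eq hs ?_
    funext b
    rw [Matrix.updateRow_ne hs, Matrix.updateRow_self]
    rfl
  have hsub : ∀ b : Fin (n + 1),
      (((Mmat k n j).updateRow r fun c => X (s, j.succAbove c)).submatrix
        r.succAbove b.succAbove) = (Mmat k n j).submatrix r.succAbove b.succAbove := by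
    intro b
    ext a c
    simp [Matrix.updateRow_ne (Fin.succAbove_ne r a)]
  rw [Matrix.det_succ_row _ r] at hdet0
  simp only [Matrix.updateRow_self, hsub] at hdet0
  calc ∑ b : Fin (n + 1),
        ((-1 : MvPolynomial (Fin (n + 1) × Fin (n + 2)) k) ^ ((j : ℕ) + (r : ℕ) + (b : ℕ)) *
          Dmm k n r j b) * X (s, j.succAbove b)
      = (-1) ^ (j : ℕ) * ∑ b : Fin (n + 1),
          (-1) ^ ((r : ℕ) + (b : ℕ)) * ((Mmat k n j).updateRow r
            fun c => X (s, j.succAbove c)) r b *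
            ((Mmat k n j).submatrix r.succAbove b.succAbove).det := by
        rw [Finset.mul_sum]
        refine Finset.sum_congr rfl fun b _ => ?_
        rw [Matrix.updateRow_self]
        show _ = (-1) ^ (j : ℕ) * ((-1) ^ ((r : ℕ) + (b : ℕ)) * X (s, j.succAbove b) *
          Dmm k n r j b)
        ring
    _ = 0 := by
        simp only [Matrix.updateRow_self]
        rw [hdet0, mul_zero]

lemma Ec_diag (j : Fin (n + 2)) : Ec k n r j j = 0 := by
  rw [Ec_eq]
  exact Finset.sum_eq_zero fun b _ => by
    rw [if_neg (Fin.succAbove_ne j b)]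

end Stmt15

namespace Stmt15

variable {k : Type*} [Field k] {n : ℕ} {r : Fin (n + 1)}

lemma one_succAbove_zero : (1 : Fin (n + 2)).succAbove (0 : Fin (n + 1)) = 0 := by
  rw [Fin.succAbove_of_castSucc_lt]
  · simp
  · simp [Fin.lt_def]

lemma succAbove_comp (c : Fin n) :
    (1 : Fin (n + 2)).succAbove ((0 : Fin (n + 1)).succAbove c)
      = (0 : Fin (n + 2)).succAbove ((0 : Fin (n + 1)).succAbove c) := by
  rw [Fin.zero_succAbove, Fin.zero_succAbove, Fin.succAbove_of_le_castSucc]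
  simp [Fin.le_def]

lemma Dmm_one_zero_eq : Dmm k n r 1 0 = Dmm k n r 0 0 := by
  have h : ((Mmat k n (1 : Fin (n + 2))).submatrix r.succAbove (0 : Fin (n + 1)).succAbove)
      = ((Mmat k n (0 : Fin (n + 2))).submatrix r.succAbove (0 : Fin (n + 1)).succAbove) := by
    ext a c
    simp only [Matrix.submatrix_apply, Mmat, Matrix.of_apply]
    rw [succAbove_comp]
  unfold Dmm
  rw [h]

lemma Ec_zero_one : Ec k n r 0 1
    = (-1 : MvPolynomial (Fin (n + 1) × Fin (n + 2)) k) ^ (1 + (r : ℕ)) * Dmm k n r 1 0 := by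
  rw [Ec_eq]
  have hcond : ∀ b : Fin (n + 1), ((1 : Fin (n + 2)).succAbove b = 0) ↔ b = 0 := by
    intro b
    rw [← one_succAbove_zero (n := n), Fin.succAbove_right_inj]
  simp only [hcond]
  rw [Finset.sum_ite_eq', if_pos (Finset.mem_univ _)]
  norm_num

lemma Ec_one_zero : Ec k n r 1 0
    = (-1 : MvPolynomial (Fin (n + 1) × Fin (n + 2)) k) ^ ((r : ℕ)) * Dmm k n r 0 0 := by
  rw [Ec_eq]
  have hcond : ∀ b : Fin (n + 1), ((0 : Fin (n + 2)).succAbove b = 1) ↔ b = 0 := by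
    intro b
    rw [Fin.zero_succAbove, ← Fin.succ_zero_eq_one, Fin.succ_inj]
  simp only [hcond]
  rw [Finset.sum_ite_eq', if_pos (Finset.mem_univ _)]
  norm_num

lemma Ec_antisym01 : Ec k n r 1 0 = - Ec k n r 0 1 := by
  rw [Ec_zero_one, Ec_one_zero, Dmm_one_zero_eq, pow_add]
  ring

end Stmt15

namespace Stmt15

variable {k : Type*} [Field k] {n : ℕ} {r : Fin (n + 1)}

/-- The evaluation point making the relevant generic minors equal to 1. -/
def pt (k : Type*) [Field k] (n : ℕ) (r : Fin (n + 1)) : Fin (n + 1) × Fin (n + 2) → k :=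
  fun v => if ((v.1 : ℕ) < (r : ℕ) ∧ (v.2 : ℕ) = (v.1 : ℕ) + 2) ∨
      ((r : ℕ) < (v.1 : ℕ) ∧ (v.2 : ℕ) = (v.1 : ℕ) + 1) then 1 else 0

lemma psi_X (i : Fin n) (l : Fin (n + 2)) :
    aeval (pt k n r) (X (r.succAbove i, l) : MvPolynomial (Fin (n + 1) × Fin (n + 2)) k)
      = if (l : ℕ) = (i : ℕ) + 2 then 1 else 0 := by
  rw [aeval_X]
  unfold pt
  rcases lt_or_ge (Fin.castSucc i) r with h | h
  · rw [Fin.succAbove_of_castSucc_lt _ _ h]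
    have hlt : (i : ℕ) < (r : ℕ) := by
      simpa [Fin.lt_def] using h
    have hiff : (((Fin.castSucc i : Fin (n + 1)) : ℕ) < (r : ℕ) ∧
          (l : ℕ) = ((Fin.castSucc i : Fin (n + 1)) : ℕ) + 2) ∨
        ((r : ℕ) < ((Fin.castSucc i : Fin (n + 1)) : ℕ) ∧
          (l : ℕ) = ((Fin.castSucc i : Fin (n + 1)) : ℕ) + 1) ↔ (l : ℕ) = (i : ℕ) + 2 := by
      rw [Fin.coe_castSucc]
      omega
    rw [if_congr hiff rfl rfl]
  · rw [Fin.succAbove_of_le_castSucc _ _ h]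
    have hle : (r : ℕ) ≤ (i : ℕ) := by
      simpa [Fin.le_def] using h
    have hiff : (((Fin.succ i : Fin (n + 1)) : ℕ) < (r : ℕ) ∧
          (l : ℕ) = ((Fin.succ i : Fin (n + 1)) : ℕ) + 2) ∨
        ((r : ℕ) < ((Fin.succ i : Fin (n + 1)) : ℕ) ∧
          (l : ℕ) = ((Fin.succ i : Fin (n + 1)) : ℕ) + 1) ↔ (l : ℕ) = (i : ℕ) + 2 := by
      rw [Fin.val_succ]
      omega
    rw [if_congr hiff rfl rfl]

lemma aeval_Dmm : aeval (pt k n r) (Dmm k n r 1 0) = 1 := by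
  rw [Dmm, AlgHom.map_det]
  have h : ((Mmat k n (1 : Fin (n + 2))).submatrix r.succAbove
      (0 : Fin (n + 1)).succAbove).map (aeval (pt k n r))
        = (1 : Matrix (Fin n) (Fin n) k) := by
    ext a c
    rw [Matrix.map_apply, Matrix.submatrix_apply,
      show (Mmat k n 1) (r.succAbove a) ((0 : Fin (n + 1)).succAbove c)
        = X (r.succAbove a, (1 : Fin (n + 2)).succAbove ((0 : Fin (n + 1)).succAbove c)) from rfl,
      succAbove_comp, Fin.zero_succAbove, Fin.zero_succAbove, psi_X, Matrix.one_apply]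
    have h2 : ((c.succ.succ : Fin (n + 2)) : ℕ) = (c : ℕ) + 2 := by
      simp [Fin.val_succ]
    by_cases hac : a = c
    · subst hac
      rw [if_pos (by omega), if_pos rfl]
    · have hval : (a : ℕ) ≠ (c : ℕ) := fun hh => hac (Fin.ext hh)
      rw [if_neg (by omega), if_neg hac]
  rw [AlgHom.mapMatrix_apply, h, Matrix.det_one]

lemma g_ne : (Ec k n r 0 1 : MvPolynomial (Fin (n + 1) × Fin (n + 2)) k) ≠ 0 := by
  rw [Ec_zero_one]
  intro h
  have h2 := congrArg (aeval (pt k n r)) h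
  rw [map_mul, map_pow, map_neg, map_one, aeval_Dmm, map_zero, mul_one] at h2
  exact pow_ne_zero _ (neg_ne_zero.mpr one_ne_zero) h2

end Stmt15

namespace Stmt15

variable {k : Type*} [Field k] {n : ℕ} {r : Fin (n + 1)}

open Matrix

/-- Auxiliary invertible matrix encoding the linear constraints on `Qv`. -/
noncomputable def Tmat (k : Type*) [Field k] (n : ℕ) (r : Fin (n + 1)) :
    Matrix (Fin (n + 2)) (Fin (n + 2)) (MvPolynomial (Fin (n + 1) × Fin (n + 2)) k) :=
  Matrix.of fun i l => Fin.cases (if l = 0 then 1 else 0)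
    (fun i1 => Fin.cases (if l = 1 then 1 else 0) (fun i2 => X (r.succAbove i2, l)) i1) i

lemma Tmat_zero (l : Fin (n + 2)) :
    Tmat k n r 0 l = if l = 0 then 1 else 0 := rfl

lemma Tmat_succ_zero (l : Fin (n + 2)) :
    Tmat k n r (Fin.succ 0) l = if l = 1 then 1 else 0 := by
  simp only [Tmat, Matrix.of_apply, Fin.cases_succ, Fin.cases_zero]

lemma Tmat_one (l : Fin (n + 2)) :
    Tmat k n r 1 l = if l = 1 then 1 else 0 := by
  rw [← Tmat_succ_zero l, Fin.succ_zero_eq_one]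

lemma Tmat_two (i2 : Fin n) (l : Fin (n + 2)) :
    Tmat k n r i2.succ.succ l = X (r.succAbove i2, l) := by
  simp only [Tmat, Matrix.of_apply, Fin.cases_succ]

/-- The Plücker-type vector which we show to vanish. -/
noncomputable def Qv (k : Type*) [Field k] (n : ℕ) (r : Fin (n + 1)) (j : Fin (n + 2)) :
    Fin (n + 2) → MvPolynomial (Fin (n + 1) × Fin (n + 2)) k :=
  fun l => Ec k n r 0 1 * Ec k n r l j - Ec k n r 0 j * Ec k n r l 1 + Ec k n r 1 j * Ec k n r l 0

lemma TQ (j : Fin (n + 2)) : Tmat k n r *ᵥ Qv k n r j = 0 := by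
  funext i
  rw [Matrix.mulVec, Pi.zero_apply]
  show ∑ l, Tmat k n r i l * Qv k n r j l = 0
  refine Fin.cases ?_ (fun i1 => Fin.cases ?_ (fun i2 => ?_) i1) i
  · have : ∀ l, Tmat k n r 0 l * Qv k n r j l = if l = 0 then Qv k n r j l else 0 := fun l => by
      rw [Tmat_zero, ite_mul, one_mul, zero_mul]
    simp only [this]
    rw [Finset.sum_ite_eq', if_pos (Finset.mem_univ _)]
    unfold Qv
    rw [Ec_diag]
    ring
  · have : ∀ l, Tmat k n r (Fin.succ 0) l * Qv k n r j l
        = if l = 1 then Qv k n r j l else 0 := fun l => by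
      rw [Tmat_succ_zero, ite_mul, one_mul, zero_mul]
    simp only [this]
    rw [Finset.sum_ite_eq', if_pos (Finset.mem_univ _)]
    unfold Qv
    rw [Ec_diag, Ec_antisym01]
    ring
  · simp only [Tmat_two]
    set s := r.succAbove i2 with hs
    have hsr : s ≠ r := Fin.succAbove_ne r i2
    have h1 : ∑ l, X (s, l) * (Ec k n r 0 1 * Ec k n r l j)
        = Ec k n r 0 1 * ∑ l, X (s, l) * Ec k n r l j := by
      rw [Finset.mul_sum]; exact Finset.sum_congr rfl fun l _ => by ring
    have h2 : ∑ l, X (s, l) * (Ec k n r 0 j * Ec k n r l 1)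
        = Ec k n r 0 j * ∑ l, X (s, l) * Ec k n r l 1 := by
      rw [Finset.mul_sum]; exact Finset.sum_congr rfl fun l _ => by ring
    have h3 : ∑ l, X (s, l) * (Ec k n r 1 j * Ec k n r l 0)
        = Ec k n r 1 j * ∑ l, X (s, l) * Ec k n r l 0 := by
      rw [Finset.mul_sum]; exact Finset.sum_congr rfl fun l _ => by ring
    calc ∑ l, X (s, l) * Qv k n r j l
        = ∑ l, (X (s, l) * (Ec k n r 0 1 * Ec k n r l j)
            - X (s, l) * (Ec k n r 0 j * Ec k n r l 1)
            + X (s, l) * (Ec k n r 1 j * Ec k n r l 0)) := by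
          refine Finset.sum_congr rfl fun l _ => ?_
          unfold Qv; ring
      _ = 0 := by
          rw [Finset.sum_add_distrib, Finset.sum_sub_distrib, h1, h2, h3,
            row_ortho hsr j, row_ortho hsr 1, row_ortho hsr 0]
          ring

lemma detT_ne : (Tmat k n r).det ≠ 0 := by
  intro h
  have h2 := congrArg (aeval (pt k n r)) h
  rw [map_zero, AlgHom.map_det, AlgHom.mapMatrix_apply] at h2
  have hT : (Tmat k n r).map (aeval (pt k n r)) = (1 : Matrix (Fin (n + 2)) (Fin (n + 2)) k) := by
    ext i l
    rw [Matrix.map_apply, Matrix.one_apply]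
    refine Fin.cases ?_ (fun i1 => Fin.cases ?_ (fun i2 => ?_) i1) i
    · rw [Tmat_zero, apply_ite (aeval (pt k n r)), _root_.map_one, map_zero]
      by_cases hl : l = 0
      · rw [if_pos hl, if_pos hl.symm]
      · rw [if_neg hl, if_neg fun hh => hl hh.symm]
    · rw [Tmat_succ_zero, apply_ite (aeval (pt k n r)), _root_.map_one, map_zero,
        Fin.succ_zero_eq_one]
      by_cases hl : l = 1
      · rw [if_pos hl, if_pos hl.symm]
      · rw [if_neg hl, if_neg fun hh => hl hh.symm]
    · rw [Tmat_two, psi_X]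
      have hv : ((i2.succ.succ : Fin (n + 2)) : ℕ) = (i2 : ℕ) + 2 := by simp [Fin.val_succ]
      by_cases hl : i2.succ.succ = l
      · rw [if_pos (by rw [← hl, hv]), if_pos hl]
      · have : (l : ℕ) ≠ (i2 : ℕ) + 2 := by
          intro hh
          exact hl (Fin.ext (by omega))
        rw [if_neg this, if_neg hl]
  rw [hT, Matrix.det_one] at h2
  exact one_ne_zero h2

lemma Qv_zero (j : Fin (n + 2)) (l : Fin (n + 2)) : Qv k n r j l = 0 := by
  have h : (Tmat k n r).det • Qv k n r j = 0 := by
    calc (Tmat k n r).det • Qv k n r j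
        = ((Tmat k n r).det • (1 : Matrix (Fin (n + 2)) (Fin (n + 2))
            (MvPolynomial (Fin (n + 1) × Fin (n + 2)) k))) *ᵥ Qv k n r j := by
          rw [Matrix.smul_mulVec, Matrix.one_mulVec]
      _ = (Tmat k n r).adjugate *ᵥ (Tmat k n r *ᵥ Qv k n r j) := by
          rw [← Matrix.adjugate_mul, ← Matrix.mulVec_mulVec]
      _ = 0 := by rw [TQ, Matrix.mulVec_zero]
  have h2 := congrFun h l
  rw [Pi.smul_apply, Pi.zero_apply, smul_eq_mul] at h2
  rcases mul_eq_zero.mp h2 with h3 | h3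
  · exact absurd h3 detT_ne
  · exact h3

lemma plucker (j l : Fin (n + 2)) :
    Ec k n r 0 1 * Ec k n r l j
      = Ec k n r 0 j * Ec k n r l 1 - Ec k n r 1 j * Ec k n r l 0 := by
  have := Qv_zero (r := r) (k := k) j l
  unfold Qv at this
  linear_combination this

lemma pluckerX (j : Fin (n + 2)) :
    Ec k n r 0 1 * Xminor k (n + 1) j
      = Ec k n r 0 j * Xminor k (n + 1) 1 - Ec k n r 1 j * Xminor k (n + 1) 0 := by
  rw [← euler (r := r) j, ← euler (r := r) 1, ← euler (r := r) 0, Finset.mul_sum,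
    Finset.mul_sum, Finset.mul_sum, ← Finset.sum_sub_distrib]
  refine Finset.sum_congr rfl fun l _ => ?_
  have h := plucker (r := r) (k := k) j l
  linear_combination X ((r, l) : Fin (n + 1) × Fin (n + 2)) * h

end Stmt15

namespace Stmt15

lemma dvd_descFactorial {p m n : ℕ} (h : n % p < m) : p ∣ n.descFactorial m := by
  induction m with
  | zero => omega
  | succ m ih =>
    rw [Nat.descFactorial_succ]
    rcases lt_or_ge (n % p) m with h2 | h2
    · exact Dvd.dvd.mul_left (ih h2) _
    · have hm : n % p = m := by omega
      have hdm : p ∣ (n - m) := by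
        have := Nat.div_add_mod n p
        exact ⟨n / p, by omega⟩
      exact Dvd.dvd.mul_right hdm _

lemma desc_mul_desc_dvd {p : ℕ} (hp : p.Prime) {a b : ℕ} (s : ℕ) (hs : s ≤ p)
    (hab : (a + b) % p = p - 1) : p ∣ a.descFactorial s * b.descFactorial (p - s) := by
  have hp1 : 1 ≤ p := hp.one_lt.le.trans' (by omega)
  have hxy : a % p + b % p = p - 1 := by
    have hx : a % p < p := Nat.mod_lt _ hp.pos
    have hy : b % p < p := Nat.mod_lt _ hp.pos
    have hmod : (a % p + b % p) % p = p - 1 := by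
      rw [← Nat.add_mod]; exact hab
    rcases lt_or_ge (a % p + b % p) p with h | h
    · rwa [Nat.mod_eq_of_lt h] at hmod
    · rw [Nat.mod_eq_sub_mod h, Nat.mod_eq_of_lt (by omega)] at hmod
      omega
  rcases lt_or_ge (a % p) s with h | h
  · exact Dvd.dvd.mul_right (dvd_descFactorial h) _
  · refine Dvd.dvd.mul_left (dvd_descFactorial (p := p) (m := p - s) (n := b) ?_) _
    omega

end Stmt15

namespace Stmt15

variable {k : Type*} [Field k] {n : ℕ} {r : Fin (n + 1)}

lemma RowFree.zero : RowFree (k := k) (n := n) r 0 := fun _ => map_zero _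

lemma RowFree.add {q₁ q₂} (h₁ : RowFree (k := k) r q₁) (h₂ : RowFree r q₂) :
    RowFree r (q₁ + q₂) := fun v => by rw [map_add, h₁ v, h₂ v, add_zero]

/-- `q` is a binary form of degree `N` in `X₁, X₀` with coefficients free of row `r`. -/
def IsBin (r : Fin (n + 1)) (N : ℕ) (q : MvPolynomial (Fin (n + 1) × Fin (n + 2)) k) : Prop :=
  ∃ C : ℕ → MvPolynomial (Fin (n + 1) × Fin (n + 2)) k,
    (∀ m, RowFree r (C m)) ∧ (∀ m, N < m → C m = 0) ∧
    q = ∑ m ∈ Finset.range (N + 1),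
      C m * Xminor k (n + 1) 1 ^ m * Xminor k (n + 1) 0 ^ (N - m)

lemma isBin_base {q} (h : RowFree (k := k) r q) : IsBin r 0 q := by
  refine ⟨fun m => Nat.casesOn m q fun _ => 0, fun m => ?_, fun m hm => ?_, ?_⟩
  · cases m with
    | zero => exact h
    | succ m' => exact RowFree.zero
  · obtain ⟨m', rfl⟩ : ∃ m', m = m' + 1 := ⟨m - 1, by omega⟩
    rfl
  · rw [Finset.sum_range_one]
    simp

lemma isBin_mul_linear {N q A B} (hq : IsBin (k := k) r N q) (hA : RowFree r A)
    (hB : RowFree r B) :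
    IsBin r (N + 1) ((A * Xminor k (n + 1) 1 + B * Xminor k (n + 1) 0) * q) := by
  obtain ⟨C, hC, hC0, rfl⟩ := hq
  set α := Xminor k (n + 1) (1 : Fin (n + 2)) with hα
  set β := Xminor k (n + 1) (0 : Fin (n + 2)) with hβ
  refine ⟨fun m => B * C m + A * (Nat.casesOn m 0 fun m' => C m'), fun m => ?_, fun m hm => ?_, ?_⟩
  · refine (hB.mul (hC m)).add (hA.mul ?_)
    cases m with
    | zero => exact RowFree.zero
    | succ m' => exact hC m'
  · obtain ⟨m', rfl⟩ : ∃ m', m = m' + 1 := ⟨m - 1, by omega⟩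
    show B * C (m' + 1) + A * C m' = 0
    rw [hC0 (m' + 1) (by omega), hC0 m' (by omega), mul_zero, mul_zero, add_zero]
  · have hsplit : ∀ m ∈ Finset.range (N + 2),
        (B * C m + A * (Nat.casesOn m 0 fun m' => C m')) * α ^ m * β ^ (N + 1 - m)
          = B * C m * α ^ m * β ^ (N + 1 - m)
            + (A * (Nat.casesOn m 0 fun m' => C m' :
                MvPolynomial (Fin (n + 1) × Fin (n + 2)) k)) * α ^ m * β ^ (N + 1 - m) := by
      intro m _; ring
    rw [Finset.sum_congr rfl hsplit, Finset.sum_add_distrib]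
    have h1 : ∑ m ∈ Finset.range (N + 2), B * C m * α ^ m * β ^ (N + 1 - m)
        = B * β * ∑ m ∈ Finset.range (N + 1), C m * α ^ m * β ^ (N - m) := by
      rw [Finset.sum_range_succ, hC0 (N + 1) (by omega), Finset.mul_sum]
      rw [mul_zero, zero_mul, zero_mul, add_zero]
      refine Finset.sum_congr rfl fun m hm => ?_
      have hmN : m ≤ N := by simpa [Nat.lt_succ_iff] using hm
      have : N + 1 - m = (N - m) + 1 := by omega
      rw [this, pow_succ]
      ring
    have h2 : ∑ m ∈ Finset.range (N + 2),
        (A * (Nat.casesOn m 0 fun m' => C m' :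
          MvPolynomial (Fin (n + 1) × Fin (n + 2)) k)) * α ^ m * β ^ (N + 1 - m)
        = A * α * ∑ m ∈ Finset.range (N + 1), C m * α ^ m * β ^ (N - m) := by
      rw [Finset.sum_range_succ', Finset.mul_sum]
      have hz : (A * (Nat.casesOn 0 0 fun m' => C m' :
          MvPolynomial (Fin (n + 1) × Fin (n + 2)) k)) * α ^ 0 * β ^ (N + 1 - 0) = 0 := by
        show A * 0 * α ^ 0 * β ^ (N + 1) = 0
        ring
      rw [hz, add_zero]
      refine Finset.sum_congr rfl fun m hm => ?_
      show A * C m * α ^ (m + 1) * β ^ (N + 1 - (m + 1)) = _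
      have : N + 1 - (m + 1) = N - m := by omega
      rw [this, pow_succ]
      ring
    rw [h1, h2]
    ring

lemma isBin_linpow_mul {N q A B} (hq : IsBin (k := k) r N q) (hA : RowFree r A)
    (hB : RowFree r B) (e : ℕ) :
    IsBin r (e + N) ((A * Xminor k (n + 1) 1 + B * Xminor k (n + 1) 0) ^ e * q) := by
  induction e with
  | zero => simpa using hq
  | succ e ih =>
    have h2 := isBin_mul_linear ih hA hB
    rw [show e + N + 1 = e + 1 + N by omega] at h2
    have heq : (A * Xminor k (n + 1) 1 + B * Xminor k (n + 1) 0) ^ (e + 1) * q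
        = (A * Xminor k (n + 1) 1 + B * Xminor k (n + 1) 0)
          * ((A * Xminor k (n + 1) 1 + B * Xminor k (n + 1) 0) ^ e * q) := by ring
    rw [heq]
    exact h2

lemma isBin_prod (J : Fin (n + 2) → ℕ) (A B : Fin (n + 2) →
      MvPolynomial (Fin (n + 1) × Fin (n + 2)) k)
    (hA : ∀ j, RowFree r (A j)) (hB : ∀ j, RowFree r (B j)) (s : Finset (Fin (n + 2))) :
    IsBin r (∑ j ∈ s, J j)
      (∏ j ∈ s, (A j * Xminor k (n + 1) 1 + B j * Xminor k (n + 1) 0) ^ J j) := by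
  induction s using Finset.cons_induction with
  | empty => simpa using isBin_base RowFree.one
  | cons a s ha ih =>
    rw [Finset.prod_cons, Finset.sum_cons]
    exact isBin_linpow_mul ih (hA a) (hB a) (J a)

end Stmt15

namespace Stmt15

variable {k : Type*} [Field k] {n : ℕ} {r : Fin (n + 1)}

/-- Composite of partial derivatives along row `r` in the columns listed in `L`. -/
noncomputable def Dop (r : Fin (n + 1)) (L : List (Fin (n + 2))) :
    Module.End k (MvPolynomial (Fin (n + 1) × Fin (n + 2)) k) :=
  (L.map fun c => ((pderiv ((r, c) : Fin (n + 1) × Fin (n + 2))).toLinearMap :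
    Module.End k (MvPolynomial (Fin (n + 1) × Fin (n + 2)) k))).prod

lemma Dop_nil (q : MvPolynomial (Fin (n + 1) × Fin (n + 2)) k) : Dop r [] q = q := rfl

lemma Dop_cons (c : Fin (n + 2)) (L : List (Fin (n + 2)))
    (q : MvPolynomial (Fin (n + 1) × Fin (n + 2)) k) :
    Dop r (c :: L) q = pderiv (r, c) (Dop r L q) := by
  rw [Dop, List.map_cons, List.prod_cons, Module.End.mul_apply]
  rfl

lemma Dop_const_mul {C : MvPolynomial (Fin (n + 1) × Fin (n + 2)) k} (hC : RowFree r C)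
    (L : List (Fin (n + 2))) (q : MvPolynomial (Fin (n + 1) × Fin (n + 2)) k) :
    Dop r L (C * q) = C * Dop r L q := by
  induction L generalizing q with
  | nil => rw [Dop_nil, Dop_nil]
  | cons c L ih =>
    rw [Dop_cons, Dop_cons, ih, pderiv_mul, hC c, zero_mul, zero_add]

lemma ff (L : List (Fin (n + 2))) (a b : ℕ) :
    ∃ f : ℕ → MvPolynomial (Fin (n + 1) × Fin (n + 2)) k,
      (∀ s, RowFree r (f s)) ∧ (∀ s, L.length < s → f s = 0) ∧
      Dop r L (Xminor k (n + 1) 1 ^ a * Xminor k (n + 1) 0 ^ b)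
        = ∑ s ∈ Finset.range (L.length + 1),
            (a.descFactorial s * b.descFactorial (L.length - s)) •
              (f s * Xminor k (n + 1) 1 ^ (a - s) * Xminor k (n + 1) 0 ^ (b - (L.length - s))) := by
  set α := Xminor k (n + 1) (1 : Fin (n + 2)) with hαdef
  set β := Xminor k (n + 1) (0 : Fin (n + 2)) with hβdef
  induction L with
  | nil =>
    refine ⟨fun s => Nat.casesOn s 1 fun _ => 0, fun s => ?_, fun s hs => ?_, ?_⟩
    · cases s with
      | zero => exact RowFree.one
      | succ s' => exact RowFree.zero
    · obtain ⟨s', rfl⟩ : ∃ s', s = s' + 1 := ⟨s - 1, by omega⟩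
      rfl
    · rw [Dop_nil, List.length_nil, Finset.sum_range_one]
      simp
  | cons c L ih =>
    obtain ⟨f, hf, hf0, hs⟩ := ih
    set t := L.length with ht
    set E1 := Ec k n r c 1 with hE1
    set E0 := Ec k n r c 0 with hE0
    have hda : pderiv ((r, c) : Fin (n + 1) × Fin (n + 2)) α = E1 := rfl
    have hdb : pderiv ((r, c) : Fin (n + 1) × Fin (n + 2)) β = E0 := rfl
    set pred : ℕ → MvPolynomial (Fin (n + 1) × Fin (n + 2)) k :=
      fun s => Nat.casesOn s 0 fun s' => f s' * E1 with hpred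
    refine ⟨fun s => pred s + f s * E0, fun s => ?_, fun s hs' => ?_, ?_⟩
    · refine RowFree.add ?_ ((hf s).mul (rowFree_Ec c 0))
      cases s with
      | zero => exact RowFree.zero
      | succ s' => exact (hf s').mul (rowFree_Ec c 1)
    · obtain ⟨s', rfl⟩ : ∃ s', s = s' + 1 := ⟨s - 1, by simp at hs'; omega⟩
      show f s' * E1 + f (s' + 1) * E0 = 0
      simp only [List.length_cons] at hs'
      rw [hf0 s' (by omega), hf0 (s' + 1) (by omega), zero_mul, zero_mul, add_zero]
    · have hterm : ∀ s ∈ Finset.range (t + 1),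
          pderiv ((r, c) : Fin (n + 1) × Fin (n + 2))
            ((a.descFactorial s * b.descFactorial (t - s)) •
              (f s * α ^ (a - s) * β ^ (b - (t - s))))
          = (a.descFactorial (s + 1) * b.descFactorial (t + 1 - (s + 1))) •
              ((pred (s + 1)) * α ^ (a - (s + 1)) * β ^ (b - (t + 1 - (s + 1))))
            + (a.descFactorial s * b.descFactorial (t + 1 - s)) •
              ((f s * E0) * α ^ (a - s) * β ^ (b - (t + 1 - s))) := by
        intro s hmem
        have hst : s ≤ t := by simpa [Nat.lt_succ_iff] using hmem
        rw [map_nsmul, pderiv_mul, pderiv_mul, hf s c, zero_mul, zero_add, pderiv_pow,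
          pderiv_pow, hda, hdb]
        show _ = (a.descFactorial (s + 1) * b.descFactorial (t + 1 - (s + 1))) •
              ((f s * E1) * α ^ (a - (s + 1)) * β ^ (b - (t + 1 - (s + 1))))
            + (a.descFactorial s * b.descFactorial (t + 1 - s)) •
              ((f s * E0) * α ^ (a - s) * β ^ (b - (t + 1 - s)))
        rw [Nat.descFactorial_succ,
          show t + 1 - (s + 1) = t - s from by omega,
          show t + 1 - s = (t - s) + 1 from by omega,
          Nat.descFactorial_succ,
          show a - (s + 1) = a - s - 1 from by omega,
          show b - (t - s + 1) = b - (t - s) - 1 from by omega]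
        simp only [nsmul_eq_mul]
        push_cast
        ring
      have hsum : Dop r (c :: L) (α ^ a * β ^ b)
          = ∑ s ∈ Finset.range (t + 1),
            ((a.descFactorial (s + 1) * b.descFactorial (t + 1 - (s + 1))) •
              ((pred (s + 1)) * α ^ (a - (s + 1)) * β ^ (b - (t + 1 - (s + 1))))
            + (a.descFactorial s * b.descFactorial (t + 1 - s)) •
              ((f s * E0) * α ^ (a - s) * β ^ (b - (t + 1 - s)))) := by
        rw [Dop_cons, hs, map_sum]
        exact Finset.sum_congr rfl hterm
      rw [hsum, Finset.sum_add_distrib]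
      have hu : ∑ s ∈ Finset.range (t + 1 + 1),
          (a.descFactorial s * b.descFactorial (t + 1 - s)) •
            ((pred s) * α ^ (a - s) * β ^ (b - (t + 1 - s)))
          = ∑ s ∈ Finset.range (t + 1),
          (a.descFactorial (s + 1) * b.descFactorial (t + 1 - (s + 1))) •
            ((pred (s + 1)) * α ^ (a - (s + 1)) * β ^ (b - (t + 1 - (s + 1)))) := by
        rw [Finset.sum_range_succ']
        have h0 : (a.descFactorial 0 * b.descFactorial (t + 1 - 0)) •
            ((pred 0) * α ^ (a - 0) * β ^ (b - (t + 1 - 0))) = 0 := by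
          show _ • ((0 : MvPolynomial (Fin (n + 1) × Fin (n + 2)) k) * _ * _) = 0
          rw [zero_mul, zero_mul, smul_zero]
        rw [h0, add_zero]
      have hv : ∑ s ∈ Finset.range (t + 1 + 1),
          (a.descFactorial s * b.descFactorial (t + 1 - s)) •
            ((f s * E0) * α ^ (a - s) * β ^ (b - (t + 1 - s)))
          = ∑ s ∈ Finset.range (t + 1),
          (a.descFactorial s * b.descFactorial (t + 1 - s)) •
            ((f s * E0) * α ^ (a - s) * β ^ (b - (t + 1 - s))) := by
        rw [Finset.sum_range_succ, hf0 (t + 1) (by omega), zero_mul, zero_mul, zero_mul,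
          smul_zero, add_zero]
      have hsplit : ∀ s ∈ Finset.range (t + 1 + 1),
          (a.descFactorial s * b.descFactorial (t + 1 - s)) •
            ((pred s + f s * E0) * α ^ (a - s) * β ^ (b - (t + 1 - s)))
          = (a.descFactorial s * b.descFactorial (t + 1 - s)) •
            ((pred s) * α ^ (a - s) * β ^ (b - (t + 1 - s)))
          + (a.descFactorial s * b.descFactorial (t + 1 - s)) •
            ((f s * E0) * α ^ (a - s) * β ^ (b - (t + 1 - s))) := by
        intro s _
        rw [add_mul, add_mul, smul_add]
      show _ = ∑ s ∈ Finset.range (t + 1 + 1),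
          (a.descFactorial s * b.descFactorial (t + 1 - s)) •
            ((pred s + f s * E0) * α ^ (a - s) * β ^ (b - (t + 1 - s)))
      rw [Finset.sum_congr rfl hsplit, Finset.sum_add_distrib, hu, hv]

end Stmt15

namespace Stmt15

variable {k : Type*} [Field k] {n : ℕ} {r : Fin (n + 1)}

lemma Dop_binpow {p : ℕ} (hp : p.Prime) [CharP k p] (L : List (Fin (n + 2)))
    (hL : L.length = p) (a b : ℕ) (hab : (a + b) % p = p - 1) :
    Dop r L (Xminor k (n + 1) 1 ^ a * Xminor k (n + 1) 0 ^ b) = 0 := by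
  obtain ⟨f, hf, hf0, hsum⟩ := ff (k := k) (r := r) L a b
  rw [hsum, hL]
  refine Finset.sum_eq_zero fun s hs => ?_
  have hsp : s ≤ p := by
    have := Finset.mem_range.mp hs; omega
  have hdvd := desc_mul_desc_dvd hp s hsp hab
  have hcast : ((a.descFactorial s * b.descFactorial (p - s) : ℕ) :
      MvPolynomial (Fin (n + 1) × Fin (n + 2)) k) = 0 :=
    (CharP.cast_eq_zero_iff _ p _).mpr hdvd
  rw [nsmul_eq_mul, hcast, zero_mul]

theorem main {p : ℕ} (hp : p.Prime) [CharP k p] (J : Fin (n + 2) → ℕ)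
    (hJ : (∑ j, J j) % p = p - 1) (c : Fin p → Fin (n + 2)) :
    Dop r (List.ofFn c) (∏ j, Xminor k (n + 1) j ^ J j) = 0 := by
  set N := ∑ j, J j with hN
  set g := Ec k n r 0 1 with hg
  have hkey : g ^ N * Dop r (List.ofFn c) (∏ j, Xminor k (n + 1) j ^ J j) = 0 := by
    rw [← Dop_const_mul ((rowFree_Ec (r := r) 0 1).pow N)]
    have h2 : g ^ N * (∏ j, Xminor k (n + 1) j ^ J j)
        = ∏ j, (Ec k n r 0 j * Xminor k (n + 1) 1
            + (- Ec k n r 1 j) * Xminor k (n + 1) 0) ^ J j := by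
      calc g ^ N * ∏ j, Xminor k (n + 1) j ^ J j
          = ∏ j, (g * Xminor k (n + 1) j) ^ J j := by
            simp only [mul_pow]
            rw [Finset.prod_mul_distrib, Finset.prod_pow_eq_pow_sum]
        _ = _ := by
            refine Finset.prod_congr rfl fun j _ => ?_
            congr 1
            rw [hg, pluckerX j]
            ring
    rw [h2]
    obtain ⟨C, hC, hC0, hq⟩ := isBin_prod (r := r) J (fun j => Ec k n r 0 j)
      (fun j => - Ec k n r 1 j) (fun j => rowFree_Ec 0 j)
      (fun j => (rowFree_Ec 1 j).neg) Finset.univ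
    rw [hq, map_sum]
    refine Finset.sum_eq_zero fun m hm => ?_
    have hmN : m ≤ N := by
      have := Finset.mem_range.mp hm; omega
    rw [mul_assoc, Dop_const_mul (hC m), Dop_binpow hp (List.ofFn c) List.length_ofFn m (N - m)
      (by rw [Nat.add_sub_cancel' hmN]; exact hJ), mul_zero]
  rcases mul_eq_zero.mp hkey with h | h
  · exact absurd h (pow_ne_zero _ g_ne)
  · exact h

end Stmt15

/-- Let `k` have characteristic `p`.  For any monomial `X^J` in the signed maximal minors of
the generic `d × (d+1)` matrix whose total degree (row sum of `J`) is `≡ −1 (mod p)`, and any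
row index `r` and column indices `j₁,…,j_p`, the `p`-fold derivative
`(∂/∂a_{r,j₁})⋯(∂/∂a_{r,j_p}) X^J = 0`. -/
theorem stmt_15 (k : Type*) [Field k] (p : ℕ) (hp : p.Prime) [CharP k p] (d : ℕ)
    (r : Fin d) (J : Fin (d + 1) → ℕ) (hJ : (∑ j, J j) % p = p - 1)
    (c : Fin p → Fin (d + 1)) :
    ((List.ofFn fun t : Fin p =>
      ((pderiv (r, c t)).toLinearMap :
        Module.End k (MvPolynomial (Fin d × Fin (d + 1)) k))).prod)
      (∏ j : Fin (d + 1), Xminor k d j ^ J j) = 0 := by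
  rcases d with _ | n
  · exact r.elim0
  · have h := Stmt15.main (k := k) hp J hJ c (r := r)
    rw [Stmt15.Dop, List.map_ofFn] at h
    exact h
end

section
/- Let p be a prime, K a field of characteristic p, and let A be a finite-dimensional graded commutative K-algebra with a degree map deg : A^d → K inducing a nondegenerate (Gorenstein) pairing. Suppose that multiplication by ℓ^{d−pm} composed with the Frobenius power map g ↦ g^p is anisotropic on A^m, i.e., deg(ℓ^{d−pm}·g^p) ≠ 0 for all nonzero g ∈ A^m. Then the multiplication map ℓ^{d−pm} : A^m → A^{d−(p−1)m} is injective, and in particular multiplication by ℓ : A^m → A^{m+1} is injective whenever m ≤ (d−1)/p. -/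
theorem eq_zero_of_mul_eq_zero_of_anisotropic {M₀ K : Type*} [CommMonoidWithZero M₀] [Zero K]
    (Q : M₀ → K) (hQ : Q 0 = 0) {c g : M₀} {n : ℕ} (hn : n ≠ 0)
    (haniso : g ≠ 0 → Q (c * g ^ n) ≠ 0) (hcg : c * g = 0) : g = 0 := by
  by_contra hg
  have hcgn : c * g ^ n = 0 := by
    rw [mul_comm]
    exact pow_mul_eq_zero_of_le (Nat.one_le_iff_ne_zero.mpr hn) (by rwa [pow_one, mul_comm])
  exact haniso hg (hcgn ▸ hQ)

theorem stmt_18_general (p : ℕ) (hp : p.Prime) (K : Type*) [Field K]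
    (A : Type*) [CommRing A] [Algebra K A] (d : ℕ) (𝒜 : ℕ → Submodule K A)
    (D : A →ₗ[K] K)
    (l : A) (m : ℕ)
    (haniso : ∀ g : A, g ∈ 𝒜 m → g ≠ 0 → D (l ^ (d - p * m) * g ^ p) ≠ 0) :
    (∀ g ∈ 𝒜 m, l ^ (d - p * m) * g = 0 → g = 0) ∧
      (p * m + 1 ≤ d → ∀ g ∈ 𝒜 m, l * g = 0 → g = 0) := by
  have hinj : ∀ g ∈ 𝒜 m, l ^ (d - p * m) * g = 0 → g = 0 := fun g hg ↦
    eq_zero_of_mul_eq_zero_of_anisotropic D (map_zero D) hp.ne_zero (haniso g hg)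
  refine ⟨hinj, fun hd g hg hlg ↦ hinj g hg ?_⟩
  exact pow_mul_eq_zero_of_le (by omega : 1 ≤ d - p * m) (by rwa [pow_one])

/-- Let `K` be a field of characteristic `p` and `A` a finite-dimensional graded commutative
`K`-algebra with degree map `D` inducing a nondegenerate pairing.  If the form
`g ↦ D(ℓ^{d−pm}·g^p)` is anisotropic on `A^m`, then multiplication by `ℓ^{d−pm}` is injective
on `A^m`, and in particular multiplication by `ℓ` is injective on `A^m` whenever
`m ≤ (d−1)/p` (i.e., `pm + 1 ≤ d`). -/
theorem stmt_18 (p : ℕ) (hp : p.Prime) (K : Type*) [Field K] [CharP K p]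
    (A : Type*) [CommRing A] [Algebra K A] (d : ℕ) (𝒜 : ℕ → Submodule K A)
    [GradedAlgebra 𝒜] [FiniteDimensional K A]
    (D : A →ₗ[K] K)
    (hnd : ∀ a : A, a ≠ 0 → ∃ b : A, D (a * b) ≠ 0)
    (l : A) (hl : l ∈ 𝒜 1) (m : ℕ) (hmd : p * m ≤ d)
    (haniso : ∀ g : A, g ∈ 𝒜 m → g ≠ 0 → D (l ^ (d - p * m) * g ^ p) ≠ 0) :
    (∀ g ∈ 𝒜 m, l ^ (d - p * m) * g = 0 → g = 0) ∧
      (p * m + 1 ≤ d → ∀ g ∈ 𝒜 m, l * g = 0 → g = 0) :=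
  stmt_18_general p hp K A d 𝒜 D l m haniso
end
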